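/- Let f, g : Finset (Fin n) → ℝ be nonnegative, monotone, submodular, with g having positive marginals and curvature c_g. Let S be the output of the greedy algorithm with final selection step maximizing f(S_k) - g(S_k) over the greedy chain. Then for every S* ⊆ Fin n: (1 - e^{c_g - 1})·f(S*) - g(S*) ≤ f(S) - g(S). -/

import Mathlib

/-!
Put `Γ = ∑_{j ∈ S*} (g{j} - g ∅)`. Since step `k` maximizes the ratio `ρ_k` of marginal gains,
submodularity bounds `f(S*) - f(S_k)` by `ρ_k` times the sum of the `g`-marginals of `S* \ S_k`
at `S_k`, hence by `ρ_k Γ`. So each greedy step shrinks the gap `f(S*) - f(S_k)` by the factor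
`1 - Δg/Γ ≤ exp(-Δg/Γ)`, and the gap is at most `f(S*) exp(-(g(S_k) - g ∅)/Γ)`. Interpolating
linearly between the two consecutive chain sets whose `g`-values bracket `g(S*)`, the best prefix
has `f - g` at least `f(S*) (1 - exp(-(g(S*) - g ∅)/Γ)) - g(S*)`; finally curvature gives
`(1 - c_g) Γ ≤ g(S*) - g ∅`, which turns the exponent into at most `c_g - 1`.
-/

/-- The greedy chain of the Ψ-Greedy algorithm: start from ∅ and at each step add the
element maximizing the ratio of marginal gains of `f` over `g`. -/
def GreedyChain (n : ℕ) (f g : Finset (Fin n) → ℝ) (S : ℕ → Finset (Fin n)) : Prop :=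
  S 0 = ∅ ∧ ∀ k < n, ∃ i ∉ S k,
    S (k + 1) = insert i (S k) ∧
    ∀ j ∉ S k,
      (f (insert j (S k)) - f (S k)) / (g (insert j (S k)) - g (S k)) ≤
        (f (insert i (S k)) - f (S k)) / (g (insert i (S k)) - g (S k))

open Finset Real

section SetFunction

variable {ι : Type*} [DecidableEq ι]

def Submodular (f : Finset ι → ℝ) : Prop :=
  ∀ S T, f (S ∪ T) + f (S ∩ T) ≤ f S + f T

def marginal (f : Finset ι → ℝ) (A : Finset ι) (i : ι) : ℝ :=
  f (insert i A) - f A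

namespace Submodular

variable {f g : Finset ι → ℝ}

theorem le_add_sum_marginal (hf : Submodular f) (A B : Finset ι) :
    f (A ∪ B) ≤ f A + ∑ j ∈ B \ A, marginal f A j := by
  induction B using Finset.induction_on with
  | empty => simp
  | @insert b B hb ih =>
    by_cases hbA : b ∈ A
    · rwa [union_insert, insert_eq_of_mem (mem_union_left B hbA), insert_sdiff_of_mem B hbA]
    · have hsub := hf (insert b A) (A ∪ B)
      have hunion : insert b A ∪ (A ∪ B) = A ∪ insert b B := by
        ext x; simp only [mem_union, mem_insert]; tauto
      have hinter : insert b A ∩ (A ∪ B) = A := by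
        ext x; simp only [mem_inter, mem_union, mem_insert]
        constructor
        · rintro ⟨rfl | hx, hx' | hx'⟩ <;> first | assumption | exact absurd hx' hb
        · intro hx; exact ⟨Or.inr hx, Or.inl hx⟩
      rw [hunion, hinter] at hsub
      rw [insert_sdiff_of_notMem B hbA, sum_insert (fun h => hb (mem_sdiff.1 h).1), marginal]
      linarith

theorem marginal_le_of_subset (hf : Submodular f) {A B : Finset ι} (hAB : A ⊆ B) {i : ι}
    (hi : i ∉ B) : marginal f B i ≤ marginal f A i := by
  have hsub := hf (insert i A) B
  rw [insert_union, union_eq_right.2 hAB, insert_inter_of_notMem hi,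
    inter_eq_left.2 hAB] at hsub
  rw [marginal, marginal]
  linarith

theorem marginal_le_singleton (hf : Submodular f) (A : Finset ι) {i : ι} (hi : i ∉ A) :
    marginal f A i ≤ f {i} - f ∅ := by
  simpa [marginal] using hf.marginal_le_of_subset (empty_subset A) hi

theorem sum_sub_erase_le [Fintype ι] (hf : Submodular f) (B : Finset ι) :
    ∑ j ∈ B, (f univ - f (univ.erase j)) ≤ f B - f ∅ := by
  induction B using Finset.induction_on with
  | empty => simp
  | @insert b B hb ih =>
    have hsub := hf (insert b B) (univ.erase b)
    have hunion : insert b B ∪ univ.erase b = univ := by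
      ext x; by_cases hx : x = b <;> simp [hx]
    have hinter : insert b B ∩ univ.erase b = B := by
      ext x; by_cases hx : x = b <;> simp [hx, hb]
    rw [hunion, hinter] at hsub
    rw [sum_insert hb]
    linarith

theorem one_sub_mul_sum_singleton_le [Fintype ι] (hf : Submodular f)
    (hpos : ∀ i, 0 < f {i} - f ∅) {c : ℝ}
    (hc : ∀ i, 1 - c ≤ (f univ - f (univ.erase i)) / (f {i} - f ∅)) (T : Finset ι) :
    (1 - c) * ∑ j ∈ T, (f {j} - f ∅) ≤ f T - f ∅ :=
  calc (1 - c) * ∑ j ∈ T, (f {j} - f ∅) = ∑ j ∈ T, (1 - c) * (f {j} - f ∅) := mul_sum ..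
    _ ≤ ∑ j ∈ T, (f univ - f (univ.erase j)) :=
        sum_le_sum fun j _ => (le_div_iff₀ (hpos j)).1 (hc j)
    _ ≤ f T - f ∅ := hf.sum_sub_erase_le T

theorem sub_le_ratio_mul_sum_singleton (hfsub : Submodular f) (hf : Monotone f)
    (hgsub : Submodular g) (hg : ∀ A i, i ∉ A → 0 < marginal g A i)
    {A : Finset ι} {i : ι} (hi : i ∉ A)
    (hmax : ∀ j ∉ A, marginal f A j / marginal g A j ≤ marginal f A i / marginal g A i)
    (T : Finset ι) :
    f T - f A ≤ marginal f A i / marginal g A i * ∑ j ∈ T, (g {j} - g ∅) := by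
  set ρ := marginal f A i / marginal g A i
  have hρ : 0 ≤ ρ := div_nonneg (sub_nonneg.2 (hf (subset_insert i A))) (hg A i hi).le
  have hsingle : ∀ j, 0 ≤ g {j} - g ∅ := fun j => by
    simpa [marginal] using (hg ∅ j (notMem_empty j)).le
  have hmarg : ∀ j ∈ T \ A, marginal f A j ≤ ρ * (g {j} - g ∅) := fun j hj => by
    have hjA := (mem_sdiff.1 hj).2
    have hgj := hg A j hjA
    calc marginal f A j = marginal f A j / marginal g A j * marginal g A j :=
          (div_mul_cancel₀ _ hgj.ne').symm
      _ ≤ ρ * marginal g A j := mul_le_mul_of_nonneg_right (hmax j hjA) hgj.le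
      _ ≤ ρ * (g {j} - g ∅) := mul_le_mul_of_nonneg_left (hgsub.marginal_le_singleton A hjA) hρ
  calc f T - f A ≤ f (A ∪ T) - f A := by linarith [hf (subset_union_right (s₁ := A) (s₂ := T))]
    _ ≤ ∑ j ∈ T \ A, marginal f A j := by linarith [hfsub.le_add_sum_marginal A T]
    _ ≤ ∑ j ∈ T \ A, ρ * (g {j} - g ∅) := sum_le_sum hmarg
    _ ≤ ∑ j ∈ T, ρ * (g {j} - g ∅) :=
        sum_le_sum_of_subset_of_nonneg sdiff_subset fun j _ _ => mul_nonneg hρ (hsingle j)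
    _ = ρ * ∑ j ∈ T, (g {j} - g ∅) := (mul_sum ..).symm

end Submodular

end SetFunction

theorem le_mul_exp_neg_add {F x y s t : ℝ} (hF : 0 ≤ F) (hx : x ≤ F * exp (-s))
    (hyx : y ≤ x) (hyt : y ≤ x * (1 - t)) : y ≤ F * exp (-(s + t)) := by
  have hFexp : 0 ≤ F * exp (-(s + t)) := by positivity
  rcases le_or_gt x 0 with hx0 | hx0
  · linarith
  rcases le_or_gt (1 - t) 0 with ht | ht
  · nlinarith
  calc y ≤ x * (1 - t) := hyt
    _ ≤ F * exp (-s) * exp (-t) :=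
        mul_le_mul hx (by linarith [add_one_le_exp (-t)]) ht.le (by positivity)
    _ = F * exp (-(s + t)) := by rw [mul_assoc, ← exp_add, neg_add]

theorem exists_lt_le_succ {b : ℕ → ℝ} {y : ℝ} {n : ℕ} (h0 : b 0 < y) (hn : y ≤ b n) :
    ∃ k < n, b k < y ∧ y ≤ b (k + 1) := by
  induction n with
  | zero => exact absurd hn (not_le.2 h0)
  | succ n ih =>
    rcases le_or_gt y (b n) with hy | hy
    · obtain ⟨k, hk, hbk⟩ := ih hy
      exact ⟨k, by omega, hbk⟩
    · exact ⟨n, n.lt_succ_self, hy, hn⟩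

section GapDecay

variable {a b : ℕ → ℝ} {F Γ : ℝ} {n : ℕ}

theorem gap_le_exp_interp (hΓ : 0 < Γ) (hF : 0 ≤ F) (ha : ∀ k < n, a k ≤ a (k + 1))
    (hstep : ∀ k < n, (b (k + 1) - b k) * (F - a k) ≤ Γ * (a (k + 1) - a k))
    {k : ℕ} (hk : k < n) (hgap : F - a k ≤ F * exp (-((b k - b 0) / Γ)))
    {θ : ℝ} (hθ : 0 ≤ θ) :
    F - (a k + θ * (a (k + 1) - a k)) ≤
      F * exp (-((b k + θ * (b (k + 1) - b k) - b 0) / Γ)) := by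
  have hgain : 0 ≤ a (k + 1) - a k := sub_nonneg.2 (ha k hk)
  have hdecay : θ * (b (k + 1) - b k) / Γ * (F - a k) ≤ θ * (a (k + 1) - a k) := by
    rw [div_mul_eq_mul_div, div_le_iff₀ hΓ, mul_assoc, mul_assoc]
    nlinarith [mul_le_mul_of_nonneg_left (hstep k hk) hθ]
  have key := le_mul_exp_neg_add (y := F - (a k + θ * (a (k + 1) - a k)))
    (t := θ * (b (k + 1) - b k) / Γ) hF hgap (by nlinarith [mul_nonneg hθ hgain]) (by linarith)
  convert key using 4
  ring

theorem gap_le_exp (hΓ : 0 < Γ) (hF : 0 ≤ F) (ha : ∀ k < n, a k ≤ a (k + 1))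
    (hstep : ∀ k < n, (b (k + 1) - b k) * (F - a k) ≤ Γ * (a (k + 1) - a k)) (ha0 : 0 ≤ a 0) :
    ∀ k ≤ n, F - a k ≤ F * exp (-((b k - b 0) / Γ)) := by
  intro k
  induction k with
  | zero => intro _; simpa using ha0
  | succ k ih =>
    intro hk
    have h := gap_le_exp_interp hΓ hF ha hstep hk (ih (by omega)) zero_le_one
    simpa only [one_mul, add_sub_cancel] using h

theorem mul_one_sub_exp_sub_le (hΓ : 0 < Γ) (hF : 0 ≤ F) (ha : ∀ k < n, a k ≤ a (k + 1))
    (hstep : ∀ k < n, (b (k + 1) - b k) * (F - a k) ≤ Γ * (a (k + 1) - a k)) (ha0 : 0 ≤ a 0)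
    {y M : ℝ} (hy0 : b 0 < y) (hyn : y ≤ b n) (hM : ∀ k ≤ n, a k - b k ≤ M) :
    F * (1 - exp (-((y - b 0) / Γ))) - y ≤ M := by
  obtain ⟨k, hk, hbk, hbk'⟩ := exists_lt_le_succ hy0 hyn
  have hδ : 0 < b (k + 1) - b k := by linarith
  set θ := (y - b k) / (b (k + 1) - b k)
  have hθ0 : 0 ≤ θ := div_nonneg (by linarith) hδ.le
  have hθ1 : θ ≤ 1 := (div_le_one hδ).2 (by linarith)
  have hy : b k + θ * (b (k + 1) - b k) = y := by
    rw [div_mul_cancel₀ _ hδ.ne']; ring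
  have hgap := gap_le_exp_interp hΓ hF ha hstep hk (gap_le_exp hΓ hF ha hstep ha0 k hk.le) hθ0
  rw [hy] at hgap
  have hconv : (1 - θ) * (a k - b k) + θ * (a (k + 1) - b (k + 1)) ≤ M := by
    nlinarith [hM k hk.le, hM (k + 1) hk]
  linarith

end GapDecay

namespace GreedyChain

variable {n : ℕ} {f g : Finset (Fin n) → ℝ} {S : ℕ → Finset (Fin n)}

theorem card_eq (hS : GreedyChain n f g S) : ∀ k ≤ n, #(S k) = k := by
  intro k
  induction k with
  | zero => intro _; simp [hS.1]
  | succ k ih =>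
    intro hk
    obtain ⟨i, hi, hins, -⟩ := hS.2 k (by omega)
    rw [hins, card_insert_of_notMem hi, ih (by omega)]

theorem last_eq_univ (hS : GreedyChain n f g S) : S n = univ :=
  eq_univ_of_card _ (by rw [hS.card_eq n le_rfl, Fintype.card_fin])

theorem subset_succ (hS : GreedyChain n f g S) {k : ℕ} (hk : k < n) : S k ⊆ S (k + 1) := by
  obtain ⟨i, -, hins, -⟩ := hS.2 k hk
  exact hins ▸ subset_insert i (S k)

theorem mul_sub_le_sum_singleton_mul (hS : GreedyChain n f g S) (hfsub : Submodular f)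
    (hf : Monotone f) (hgsub : Submodular g) (hg : ∀ A i, i ∉ A → 0 < marginal g A i)
    (T : Finset (Fin n)) {k : ℕ} (hk : k < n) :
    (g (S (k + 1)) - g (S k)) * (f T - f (S k)) ≤
      (∑ j ∈ T, (g {j} - g ∅)) * (f (S (k + 1)) - f (S k)) := by
  obtain ⟨i, hi, hins, hmax⟩ := hS.2 k hk
  have h := hfsub.sub_le_ratio_mul_sum_singleton hf hgsub hg hi hmax T
  rw [div_mul_eq_mul_div, le_div_iff₀ (hg (S k) i hi)] at h
  rw [hins]
  unfold marginal at h
  linarith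

end GreedyChain

theorem stmt_14_general (n : ℕ) (hn : 0 < n) (f g : Finset (Fin n) → ℝ)
    (hfnn : ∀ S : Finset (Fin n), 0 ≤ f S)
    (hfsub : ∀ S T : Finset (Fin n), f (S ∪ T) + f (S ∩ T) ≤ f S + f T)
    (hgsub : ∀ S T : Finset (Fin n), g (S ∪ T) + g (S ∩ T) ≤ g S + g T)
    (hfmono : ∀ A B : Finset (Fin n), A ⊆ B → f A ≤ f B)
    (hgmono : ∀ A B : Finset (Fin n), A ⊆ B → g A ≤ g B)
    (hgmarg : ∀ (A : Finset (Fin n)) (i : Fin n), i ∉ A → 0 < g (insert i A) - g A)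
    (cg : ℝ)
    (hcg : cg = 1 - Finset.univ.inf'
      (Finset.univ_nonempty_iff.mpr (Fin.pos_iff_nonempty.mp hn))
      (fun i : Fin n => (g Finset.univ - g (Finset.univ.erase i)) / (g {i} - g ∅)))
    (S : ℕ → Finset (Fin n)) (hchain : GreedyChain n f g S)
    (Sout : Finset (Fin n))
    (hbest : ∀ k ≤ n, f (S k) - g (S k) ≤ f Sout - g Sout) :
    ∀ Sstar : Finset (Fin n),
      (1 - Real.exp (cg - 1)) * f Sstar - g Sstar ≤ f Sout - g Sout := by
  intro Sstar
  have hS0 : S 0 = ∅ := hchain.1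
  rcases Sstar.eq_empty_or_nonempty with rfl | ⟨j₀, hj₀⟩
  · have hbest0 := hbest 0 (Nat.zero_le n)
    rw [hS0] at hbest0
    linarith [mul_nonneg (exp_pos (cg - 1)).le (hfnn ∅)]
  have hsingle : ∀ j : Fin n, 0 < g {j} - g ∅ := fun j => by
    simpa using hgmarg ∅ j (notMem_empty j)
  set Γ := ∑ j ∈ Sstar, (g {j} - g ∅)
  have hΓ : 0 < Γ := sum_pos (fun j _ => hsingle j) ⟨j₀, hj₀⟩
  have hcurv : (1 - cg) * Γ ≤ g Sstar - g ∅ :=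
    Submodular.one_sub_mul_sum_singleton_le hgsub hsingle
      (fun j => by rw [hcg, sub_sub_cancel]; exact inf'_le _ (mem_univ j)) Sstar
  have hgap := mul_one_sub_exp_sub_le (a := fun k => f (S k)) (b := fun k => g (S k))
    (y := g Sstar) hΓ (hfnn Sstar)
    (fun k hk => hfmono _ _ (hchain.subset_succ hk))
    (fun k hk => hchain.mul_sub_le_sum_singleton_mul hfsub (fun A B => hfmono A B) hgsub hgmarg
      Sstar hk)
    (hfnn _)
    (by rw [hS0]; linarith [hsingle j₀, hgmono _ _ (singleton_subset_iff.2 hj₀)])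
    (by rw [hchain.last_eq_univ]; exact hgmono _ _ (subset_univ Sstar)) hbest
  have hexp : exp (-((g Sstar - g (S 0)) / Γ)) ≤ exp (cg - 1) := by
    rw [exp_le_exp, hS0, neg_le, neg_sub, le_div_iff₀ hΓ]
    exact hcurv
  linarith [mul_le_mul_of_nonneg_left hexp (hfnn Sstar)]

theorem stmt_14 (n : ℕ) (hn : 0 < n) (f g : Finset (Fin n) → ℝ)
    (hfnn : ∀ S : Finset (Fin n), 0 ≤ f S) (hgnn : ∀ S : Finset (Fin n), 0 ≤ g S)
    (hfsub : ∀ S T : Finset (Fin n), f (S ∪ T) + f (S ∩ T) ≤ f S + f T)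
    (hgsub : ∀ S T : Finset (Fin n), g (S ∪ T) + g (S ∩ T) ≤ g S + g T)
    (hfmono : ∀ A B : Finset (Fin n), A ⊆ B → f A ≤ f B)
    (hgmono : ∀ A B : Finset (Fin n), A ⊆ B → g A ≤ g B)
    (hgmarg : ∀ (A : Finset (Fin n)) (i : Fin n), i ∉ A → 0 < g (insert i A) - g A)
    (cg : ℝ)
    (hcg : cg = 1 - Finset.univ.inf'
      (Finset.univ_nonempty_iff.mpr (Fin.pos_iff_nonempty.mp hn))
      (fun i : Fin n => (g Finset.univ - g (Finset.univ.erase i)) / (g {i} - g ∅)))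
    (S : ℕ → Finset (Fin n)) (hchain : GreedyChain n f g S)
    (Sout : Finset (Fin n))
    (hmem : ∃ k ≤ n, Sout = S k)
    (hbest : ∀ k ≤ n, f (S k) - g (S k) ≤ f Sout - g Sout) :
    ∀ Sstar : Finset (Fin n),
      (1 - Real.exp (cg - 1)) * f Sstar - g Sstar ≤ f Sout - g Sout :=
  stmt_14_general n hn f g hfnn hfsub hgsub hfmono hgmono hgmarg cg hcg S hchain Sout hbest
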